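/- Let δ ∈ ℝ, σ : ℝ → ℝ, let Φ : ℝ → ℝ be differentiable, set σ̂(z) := δ + σ(z) − Φ'(z)/2, and let κ : ℝ → ℝ be even (κ(−z) = κ(z) for all z). Define the reversed configuration σᵣ(z) := σ(−z) and Φᵣ(z) := −Φ(−z), with combined coefficient σ̂ᵣ(z) := δ + σᵣ(z) − Φᵣ'(z)/2. Then σ̂ᵣ(z) = σ̂(−z) for all z ∈ ℝ, and for any L > 0, if differentiable R, S : ℝ → ℂ satisfy the coupled-mode system with coefficients (σ̂, κ) on [−L/2, L/2], then R̃(t) := S(−t), S̃(t) := R(−t) satisfy the coupled-mode system with coefficients (σ̂ᵣ, κ) on [−L/2, L/2], i.e. R̃'(t) − i·σ̂ᵣ(t)·R̃(t) = i·κ(t)·S̃(t) and S̃'(t) + i·σ̂ᵣ(t)·S̃(t) = −i·κ(t)·R̃(t). (Theorem 4.1(d): if the AC-coupling is even, the configurations (σ(z), Φ(z)) and (σ(−z), −Φ(−z)) produce the same spectrum.) -/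

import Mathlib

open Complex

theorem deriv_neg_comp_neg {𝕜 F : Type*} [NontriviallyNormedField 𝕜] [NormedAddCommGroup F]
    [NormedSpace 𝕜 F] (f : 𝕜 → F) (x : 𝕜) :
    deriv (fun y => -f (-y)) x = deriv f (-x) := by
  rw [deriv.fun_neg, deriv_comp_neg, neg_neg]

/-- `β` stands for the combined coefficient `σ̂`. -/
def IsCoupledModeSolutionAt (β κ : ℝ → ℝ) (R S : ℝ → ℂ) (z : ℝ) : Prop :=
  deriv R z - I * (β z : ℂ) * R z = I * (κ z : ℂ) * S z ∧
    deriv S z + I * (β z : ℂ) * S z = -(I * (κ z : ℂ) * R z)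

theorem IsCoupledModeSolutionAt.reflect {β κ : ℝ → ℝ} {R S : ℝ → ℂ} {t : ℝ}
    (h : IsCoupledModeSolutionAt β κ R S (-t)) :
    IsCoupledModeSolutionAt (fun z => β (-z)) (fun z => κ (-z))
      (fun z => S (-z)) (fun z => R (-z)) t := by
  obtain ⟨hR, hS⟩ := h
  simp only [IsCoupledModeSolutionAt, deriv_comp_neg]
  constructor
  · linear_combination -hS
  · linear_combination -hR

theorem reversed_configuration_invariance_general
    (δ : ℝ) (σ Φ κ : ℝ → ℝ)
    (hκ : ∀ z, κ (-z) = κ z) :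
    (∀ z : ℝ,
      δ + σ (-z) - deriv (fun w => -Φ (-w)) z / 2
        = δ + σ (-z) - deriv Φ (-z) / 2) ∧
    ∀ L : ℝ, 0 < L →
      ∀ R S : ℝ → ℂ, Differentiable ℝ R → Differentiable ℝ S →
      (∀ z ∈ Set.Icc (-(L / 2)) (L / 2),
        deriv R z - Complex.I * ((δ + σ z - deriv Φ z / 2 : ℝ) : ℂ) * R z
            = Complex.I * (κ z : ℂ) * S z ∧
        deriv S z + Complex.I * ((δ + σ z - deriv Φ z / 2 : ℝ) : ℂ) * S z
            = -(Complex.I * (κ z : ℂ) * R z)) →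
      ∀ t ∈ Set.Icc (-(L / 2)) (L / 2),
        deriv (fun t => S (-t)) t
            - Complex.I * ((δ + σ (-t) - deriv (fun w => -Φ (-w)) t / 2 : ℝ) : ℂ) * S (-t)
          = Complex.I * (κ t : ℂ) * R (-t) ∧
        deriv (fun t => R (-t)) t
            + Complex.I * ((δ + σ (-t) - deriv (fun w => -Φ (-w)) t / 2 : ℝ) : ℂ) * R (-t)
          = -(Complex.I * (κ t : ℂ) * S (-t)) := by
  refine ⟨fun z => by rw [deriv_neg_comp_neg], fun L _ R S _ _ hsys t ht => ?_⟩
  have ht' : -t ∈ Set.Icc (-(L / 2)) (L / 2) := ⟨by linarith [ht.2], by linarith [ht.1]⟩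
  have hrev : IsCoupledModeSolutionAt (fun z => δ + σ z - deriv Φ z / 2) κ R S (-t) :=
    hsys (-t) ht'
  simpa only [IsCoupledModeSolutionAt, hκ, deriv_neg_comp_neg] using hrev.reflect

/-- Theorem 4.1(d): if the AC-coupling `κ` is even, then the reversed
configuration `σᵣ(z) := σ(−z)`, `Φᵣ(z) := −Φ(−z)` has combined coefficient
`σ̂ᵣ(z) = σ̂(−z)`, and whenever `(R, S)` solves the coupled-mode system with
coefficients `(σ̂, κ)` on `[−L/2, L/2]`, the reversed pair `R̃(t) := S(−t)`,
`S̃(t) := R(−t)` solves the coupled-mode system with coefficients `(σ̂ᵣ, κ)`. -/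
theorem reversed_configuration_invariance
    (δ : ℝ) (σ Φ κ : ℝ → ℝ) (hΦ : Differentiable ℝ Φ)
    (hκ : ∀ z, κ (-z) = κ z) :
    (∀ z : ℝ,
      δ + σ (-z) - deriv (fun w => -Φ (-w)) z / 2
        = δ + σ (-z) - deriv Φ (-z) / 2) ∧
    ∀ L : ℝ, 0 < L →
      ∀ R S : ℝ → ℂ, Differentiable ℝ R → Differentiable ℝ S →
      (∀ z ∈ Set.Icc (-(L / 2)) (L / 2),
        deriv R z - Complex.I * ((δ + σ z - deriv Φ z / 2 : ℝ) : ℂ) * R z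
            = Complex.I * (κ z : ℂ) * S z ∧
        deriv S z + Complex.I * ((δ + σ z - deriv Φ z / 2 : ℝ) : ℂ) * S z
            = -(Complex.I * (κ z : ℂ) * R z)) →
      ∀ t ∈ Set.Icc (-(L / 2)) (L / 2),
        deriv (fun t => S (-t)) t
            - Complex.I * ((δ + σ (-t) - deriv (fun w => -Φ (-w)) t / 2 : ℝ) : ℂ) * S (-t)
          = Complex.I * (κ t : ℂ) * R (-t) ∧
        deriv (fun t => R (-t)) t
            + Complex.I * ((δ + σ (-t) - deriv (fun w => -Φ (-w)) t / 2 : ℝ) : ℂ) * R (-t)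
          = -(Complex.I * (κ t : ℂ) * S (-t)) :=
  reversed_configuration_invariance_general δ σ Φ κ hκ
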